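/- Let p_0, …, p_n (n ≥ 1) be the vertices of a left-turning polygonal arc in ℝ² with turning angles θ_1, …, θ_{n−1} ∈ (0, π) whose total curvature θ_1 + ⋯ + θ_{n−1} is strictly less than π. Let R_0 = { p_0 − t·(p_1 − p_0) : t ≥ 0 } be the backward extension ray of the first edge and R_1 = { p_n + s·(p_n − p_{n−1}) : s ≥ 0 } be the forward extension ray of the last edge. Then R_0 and R_1 are disjoint. -/

import Mathlib

open Real Finset

/-- The planar cross product (2×2 determinant) of two vectors in `ℝ²`. -/
def detv (u v : EuclideanSpace ℝ (Fin 2)) : ℝ := u 0 * v 1 - u 1 * v 0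

/-- `p 0, …, p n` is a polygonal arc (consecutive vertices distinct) which is left-turning with
turning angles `θ 1, …, θ (n-1) ∈ (0, π)`: at each interior vertex the oriented angle from the
incoming edge direction to the outgoing edge direction equals `θ j`; for `θ j ∈ (0, π)` this is
equivalent to the cross product of the two edge directions being positive together with the
unoriented angle between them being `θ j`. -/
def IsLeftTurningArc (p : ℕ → EuclideanSpace ℝ (Fin 2)) (θ : ℕ → ℝ) (n : ℕ) : Prop :=
  (∀ j, j < n → p (j + 1) ≠ p j) ∧
  ∀ j, 1 ≤ j → j ≤ n - 1 →
    0 < θ j ∧ θ j < Real.pi ∧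
    0 < detv (p j - p (j - 1)) (p (j + 1) - p j) ∧
    InnerProductGeometry.angle (p j - p (j - 1)) (p (j + 1) - p j) = θ j

/-!
Identify `ℝ²` with `ℂ` and let `z j` be the direction of the `j`-th edge. Turning angles add up
as arguments, so `z j / z 0` has argument `θ 1 + ⋯ + θ j ∈ [0, Θ]`, where `Θ < π` is the total
curvature. Hence every edge direction lies in the open half-plane bisected by `z 0` rotated by
`Θ / 2`, and a linear functional positive on all edges exists. Along the arc it strictly
increases, along `R₀` it does not increase and along `R₁` it does not decrease, so the rays
cannot meet.
-/

open Complex InnerProductGeometry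

theorem disjoint_extension_rays_of_forall_pos {E : Type*} [AddCommGroup E] [Module ℝ E]
    (ℓ : E →ₗ[ℝ] ℝ) {n : ℕ} (hn : 1 ≤ n) (p : ℕ → E)
    (hℓ : ∀ j < n, 0 < ℓ (p (j + 1) - p j)) :
    Disjoint {x : E | ∃ t : ℝ, 0 ≤ t ∧ x = p 0 - t • (p 1 - p 0)}
      {x : E | ∃ s : ℝ, 0 ≤ s ∧ x = p n + s • (p n - p (n - 1))} := by
  rw [Set.disjoint_left]
  rintro _ ⟨t, ht, rfl⟩ ⟨s, hs, hx⟩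
  have hrise : ℓ (p 0) < ℓ (p n) := by
    have hsum : 0 < ∑ j ∈ range n, ℓ (p (j + 1) - p j) :=
      sum_pos (fun j hj => hℓ j (mem_range.1 hj)) (nonempty_range_iff.2 (by omega))
    simp only [map_sub, sum_range_sub (fun j => ℓ (p j))] at hsum
    linarith
  have hback : ℓ (p 0 - t • (p 1 - p 0)) ≤ ℓ (p 0) := by
    simpa using mul_nonneg ht (hℓ 0 hn).le
  have hfwd : ℓ (p n) ≤ ℓ (p n + s • (p n - p (n - 1))) := by
    have hlast := hℓ (n - 1) (by omega)
    rw [Nat.sub_add_cancel hn] at hlast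
    simpa using mul_nonneg hs hlast.le
  rw [hx] at hback
  linarith

theorem Complex.re_pos_of_arg_coe_angle_eq {w : ℂ} (hw : w ≠ 0) {α : ℝ} (hα : |α| < π / 2)
    (h : (arg w : Real.Angle) = α) : 0 < w.re := by
  obtain ⟨hα₁, hα₂⟩ := abs_lt.1 hα
  rw [arg_coe_angle_eq_iff_eq_toReal,
    Real.Angle.toReal_coe_eq_self_iff.2 ⟨by linarith [pi_pos], by linarith [pi_pos]⟩] at h
  exact (abs_arg_lt_pi_div_two_iff.1 (h ▸ hα)).resolve_right hw

theorem Complex.arg_div_coe_angle_eq_sum {z : ℕ → ℂ} {θ : ℕ → ℝ} {n : ℕ}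
    (hz : ∀ j < n, z j ≠ 0) (hθ : ∀ j, j + 1 < n → arg (z (j + 1) / z j) = θ (j + 1)) :
    ∀ j < n, (arg (z j / z 0) : Real.Angle) = ∑ i ∈ Icc 1 j, θ i := by
  intro j hj
  induction j with
  | zero => simp [div_self (hz 0 hj)]
  | succ j ih =>
    have h₀ := hz 0 (by omega)
    have hj₀ := hz j (by omega)
    rw [← div_mul_div_cancel₀ hj₀, arg_mul_coe_angle (div_ne_zero (hz _ hj) hj₀)
      (div_ne_zero hj₀ h₀), hθ j hj, ih (by omega), sum_Icc_succ_top (by omega),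
      Real.Angle.coe_add, add_comm]

theorem Complex.exists_forall_re_div_pos {z : ℕ → ℂ} {θ : ℕ → ℝ} {n : ℕ}
    (hz : ∀ j < n, z j ≠ 0) (hθ : ∀ j, j + 1 < n → arg (z (j + 1) / z j) = θ (j + 1))
    (hθ₀ : ∀ j, 1 ≤ j → j ≤ n - 1 → 0 ≤ θ j) (hsum : ∑ j ∈ Icc 1 (n - 1), θ j < π) :
    ∃ b : ℂ, ∀ j < n, 0 < (z j / b).re := by
  set Θ := ∑ j ∈ Icc 1 (n - 1), θ j
  refine ⟨z 0 * exp ((Θ / 2 : ℝ) * I), fun j hj => ?_⟩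
  have h₀ := hz 0 (by omega)
  have hφ₀ : 0 ≤ ∑ i ∈ Icc 1 j, θ i :=
    sum_nonneg fun i hi => hθ₀ i (mem_Icc.1 hi).1 (by grind)
  have hφΘ : ∑ i ∈ Icc 1 j, θ i ≤ Θ :=
    sum_le_sum_of_subset_of_nonneg (Icc_subset_Icc_right (by omega))
      fun i hi _ => hθ₀ i (mem_Icc.1 hi).1 (mem_Icc.1 hi).2
  refine re_pos_of_arg_coe_angle_eq (div_ne_zero (hz j hj) (mul_ne_zero h₀ (exp_ne_zero _)))
    (α := ∑ i ∈ Icc 1 j, θ i - Θ / 2) (abs_lt.2 ⟨by linarith, by linarith⟩) ?_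
  rw [← div_div, arg_div_coe_angle (div_ne_zero (hz j hj) h₀) (exp_ne_zero _),
    arg_div_coe_angle_eq_sum hz hθ j hj, arg_exp_mul_I, Real.Angle.coe_toIocMod,
    Real.Angle.coe_sub]

noncomputable def toComplex : EuclideanSpace ℝ (Fin 2) ≃ₗᵢ[ℝ] ℂ :=
  Complex.orthonormalBasisOneI.repr.symm

theorem arg_div_toComplex_eq_angle {u v : EuclideanSpace ℝ (Fin 2)} (hu : u ≠ 0) (hv : v ≠ 0)
    (h : 0 < detv u v) : arg (toComplex v / toComplex u) = angle u v := by
  have him : (toComplex v / toComplex u).im = detv u v / normSq (toComplex u) := by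
    simp [toComplex, div_im, detv]
    ring
  rw [← toComplex.toLinearIsometry.angle_map, angle_comm,
    LinearIsometryEquiv.coe_toLinearIsometry, angle_eq_abs_arg (by simpa using hv)
      (by simpa using hu), abs_of_nonneg (arg_nonneg_iff.2 (him ▸ div_nonneg h.le (normSq_nonneg _)))]

/-- For a left-turning polygonal arc of total curvature strictly less than `π`, the backward
extension ray of the first edge and the forward extension ray of the last edge are disjoint. -/
theorem extension_rays_disjoint
    (n : ℕ) (hn : 1 ≤ n) (p : ℕ → EuclideanSpace ℝ (Fin 2)) (θ : ℕ → ℝ)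
    (harc : IsLeftTurningArc p θ n)
    (hcurv : (∑ j ∈ Finset.Icc 1 (n - 1), θ j) < Real.pi) :
    Disjoint
      {x : EuclideanSpace ℝ (Fin 2) | ∃ t : ℝ, 0 ≤ t ∧ x = p 0 - t • (p 1 - p 0)}
      {x : EuclideanSpace ℝ (Fin 2) | ∃ s : ℝ, 0 ≤ s ∧ x = p n + s • (p n - p (n - 1))} := by
  obtain ⟨hne, hturn⟩ := harc
  have hedge : ∀ j < n, p (j + 1) - p j ≠ 0 := fun j hj => sub_ne_zero.2 (hne j hj)
  set z : ℕ → ℂ := fun j => toComplex (p (j + 1) - p j)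
  have hz : ∀ j < n, z j ≠ 0 := fun j hj =>
    (map_ne_zero_iff _ toComplex.injective).2 (hedge j hj)
  have hzθ : ∀ j, j + 1 < n → arg (z (j + 1) / z j) = θ (j + 1) := fun j hj => by
    obtain ⟨-, -, hdet, hangle⟩ := hturn (j + 1) (by omega) (by omega)
    simp only [Nat.add_sub_cancel] at hdet hangle
    rw [arg_div_toComplex_eq_angle (hedge j (by omega)) (hedge (j + 1) hj) hdet, hangle]
  obtain ⟨b, hb⟩ := exists_forall_re_div_pos hz hzθ (fun j h₁ h₂ => (hturn j h₁ h₂).1.le) hcurv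
  exact disjoint_extension_rays_of_forall_pos
    (reLm ∘ₗ LinearMap.mulRight ℝ b⁻¹ ∘ₗ toComplex.toLinearMap) hn p hb
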